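/- Suppose C ∈ 𝔖_k and there exist a subset S° ⊆ S_k, positive reals (k_s)_{s∈S°}, and a neighborhood N of C in 𝔖_k such that every s ∈ S° satisfies g_s(C) = g_{S_k}(C), and for all C' ∈ N, Σ_{s∈S°} k_s·(g_s(C') − g_s(C)) = 0. Then C is a local minimizer of g_{S_k} over 𝔖_k; and since g_{S_k} is convex, C is a global minimizer. -/

import Mathlib

open Finset Filter

/-- Membership in the affine set 𝔖ₖ. -/
def inSk (k : ℕ) (C : Fin k → Matrix (Fin k) (Fin k) ℝ) : Prop :=
  ∀ ℓ : Fin k,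
    (∀ i : Fin k, i ≠ ℓ → ∑ j, C ℓ i j = 0) ∧
    (∀ j : Fin k, j ≠ ℓ → ∑ i, C ℓ i j = 0) ∧
    (∑ i, ∑ j, C ℓ i j = 1)

/-- A k-sample: nonempty subset of [k]×[k] with pairwise distinct second coordinates. -/
def IsSample {k : ℕ} (s : Finset (Fin k × Fin k)) : Prop :=
  s.Nonempty ∧ ∀ p ∈ s, ∀ q ∈ s, p ≠ q → p.2 ≠ q.2

/-- g_s^{(ℓ)}(C) -/
def gPart {k : ℕ} (s : Finset (Fin k × Fin k)) (C : Fin k → Matrix (Fin k) (Fin k) ℝ)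
    (ℓ : Fin k) : ℝ :=
  ∑ p ∈ s, C ℓ p.1 p.2

/-- g_s(C) -/
def gSample {k : ℕ} (s : Finset (Fin k × Fin k)) (C : Fin k → Matrix (Fin k) (Fin k) ℝ) : ℝ :=
  ∑ ℓ : Fin k, |gPart s C ℓ|

/-- g_{S_k}(C) : the maximum of g_s(C) over all k-samples s. -/
noncomputable def gMax (k : ℕ) (C : Fin k → Matrix (Fin k) (Fin k) ℝ) : ℝ :=
  ⨆ s : {s : Finset (Fin k × Fin k) // IsSample s}, gSample s.1 C

/-- multiplicity of ℓ in the multiset of coordinates of elements of s -/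
def mult {k : ℕ} (s : Finset (Fin k × Fin k)) (ℓ : Fin k) : ℕ :=
  (s.filter (fun p => p.1 = ℓ)).card + (s.filter (fun p => p.2 = ℓ)).card

/-- β(s): number of distinct indices among coordinates of s -/
def beta {k : ℕ} (s : Finset (Fin k × Fin k)) : ℕ :=
  (s.image Prod.fst ∪ s.image Prod.snd).card

/-- γ(s): number of diagonal elements of s -/
def gamma {k : ℕ} (s : Finset (Fin k × Fin k)) : ℕ :=
  (s.filter (fun p => p.1 = p.2)).card

/-- the strong homogeneous flow C*_k -/
noncomputable def Cstar (k : ℕ) : Fin k → Matrix (Fin k) (Fin k) ℝ :=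
  fun ℓ i j =>
    if i = ℓ ∧ j = ℓ then 2/(k:ℝ) - 1/(k:ℝ)^2
    else if i = ℓ ∨ j = ℓ then 1/(k:ℝ) - 1/(k:ℝ)^2
    else -1/(k:ℝ)^2

/-- the Sym(k)-invariant tuple with parameters x (i=j=ℓ), y (i=j≠ℓ),
a (exactly one of i,j equals ℓ), b (otherwise) -/
def Cfix (k : ℕ) (x y a b : ℝ) : Fin k → Matrix (Fin k) (Fin k) ℝ :=
  fun ℓ i j =>
    if i = ℓ ∧ j = ℓ then x
    else if i = j then y
    else if i = ℓ ∨ j = ℓ then a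
    else b

/-- The Sym(k)-action on tuples of matrices. -/
def permAct {k : ℕ} (σ : Equiv.Perm (Fin k)) (C : Fin k → Matrix (Fin k) (Fin k) ℝ) :
    Fin k → Matrix (Fin k) (Fin k) ℝ :=
  fun ℓ i j => C (σ⁻¹ ℓ) (σ⁻¹ i) (σ⁻¹ j)

/-- optimal value O_k -/
noncomputable def Ovalue (k : ℕ) : ℝ := sInf {y | ∃ C, inSk k C ∧ gMax k C = y}

/-!
If `gMax k C' < gMax k C` for some `C' ∈ 𝔖ₖ`, step from `C` towards `C'` by a small `t > 0`.
The segment stays in the affine set `𝔖ₖ` and inside the neighbourhood, and each `gSample s` is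
convex, so for `s ∈ S0` it drops by at least `t (gMax k C - gMax k C') > 0` (as `gSample s C` is
maximal and `gSample s C' ≤ gMax k C'`). The weighted sum of these changes is then negative,
contradicting the balance condition.
-/

open Topology

theorem convex_setOf_inSk (k : ℕ) : Convex ℝ {C | inSk k C} := by
  intro C hC D hD a b _ _ hab ℓ
  obtain ⟨hrow, hcol, htot⟩ := hC ℓ
  obtain ⟨hrow', hcol', htot'⟩ := hD ℓ
  simp only [Pi.add_apply, Pi.smul_apply, Matrix.add_apply, Matrix.smul_apply, smul_eq_mul,
    Finset.sum_add_distrib, ← Finset.mul_sum]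
  refine ⟨fun i hi => ?_, fun j hj => ?_, ?_⟩
  · simp [hrow i hi, hrow' i hi]
  · simp [hcol j hj, hcol' j hj]
  · simp [htot, htot', hab]

theorem gPart_smul_add_smul {k : ℕ} (s : Finset (Fin k × Fin k))
    (C D : Fin k → Matrix (Fin k) (Fin k) ℝ) (a b : ℝ) (ℓ : Fin k) :
    gPart s (a • C + b • D) ℓ = a * gPart s C ℓ + b * gPart s D ℓ := by
  simp only [gPart, Pi.add_apply, Pi.smul_apply, Matrix.add_apply, Matrix.smul_apply, smul_eq_mul,
    Finset.sum_add_distrib, Finset.mul_sum]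

theorem convexOn_gSample {k : ℕ} (s : Finset (Fin k × Fin k)) :
    ConvexOn ℝ Set.univ (gSample s) := by
  refine ⟨convex_univ, fun C _ D _ a b ha hb _ => ?_⟩
  simp only [gSample, gPart_smul_add_smul, smul_eq_mul, Finset.mul_sum, ← Finset.sum_add_distrib]
  gcongr with ℓ
  calc |a * gPart s C ℓ + b * gPart s D ℓ| ≤ |a * gPart s C ℓ| + |b * gPart s D ℓ| :=
        abs_add_le _ _
    _ = a * |gPart s C ℓ| + b * |gPart s D ℓ| := by
        rw [abs_mul, abs_mul, abs_of_nonneg ha, abs_of_nonneg hb]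

theorem gSample_le_gMax {k : ℕ} {s : Finset (Fin k × Fin k)} (hs : IsSample s)
    (C : Fin k → Matrix (Fin k) (Fin k) ℝ) : gSample s C ≤ gMax k C :=
  le_ciSup (f := fun s : {s : Finset (Fin k × Fin k) // IsSample s} => gSample s.1 C)
    (Set.finite_range _).bddAbove ⟨s, hs⟩

theorem eventually_abs_lineMap_sub_lt {ι m n : Type*} [Finite ι] [Finite m] [Finite n]
    (C D : ι → Matrix m n ℝ) {ε : ℝ} (hε : 0 < ε) :
    ∀ᶠ t in 𝓝 (0 : ℝ), ∀ ℓ i j, |AffineMap.lineMap C D t ℓ i j - C ℓ i j| < ε := by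
  have hlim : Tendsto (fun t : ℝ => AffineMap.lineMap C D t) (𝓝 0) (𝓝 C) := by
    simpa using (AffineMap.lineMap_continuous (p := C) (q := D)).tendsto (0 : ℝ)
  simp only [eventually_all]
  intro ℓ i j
  have hentry : Tendsto (fun t : ℝ => AffineMap.lineMap C D t ℓ i j) (𝓝 0) (𝓝 (C ℓ i j)) :=
    tendsto_pi_nhds.1 (tendsto_pi_nhds.1 (tendsto_pi_nhds.1 hlim ℓ) i) j
  simpa [Real.dist_eq] using Metric.tendsto_nhds.1 hentry ε hε

theorem sum_mul_sub_neg_of_lineMap {E ι : Type*} [AddCommGroup E] [Module ℝ E] {K : Set E}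
    {S : Finset ι} (hS : S.Nonempty) {f : ι → E → ℝ} (hf : ∀ s ∈ S, ConvexOn ℝ K (f s))
    {w : ι → ℝ} (hw : ∀ s ∈ S, 0 < w s) {x y : E} (hx : x ∈ K) (hy : y ∈ K) {m M : ℝ}
    (hfx : ∀ s ∈ S, f s x = m) (hfy : ∀ s ∈ S, f s y ≤ M) (hMm : M < m) {t : ℝ}
    (ht₀ : 0 < t) (ht₁ : t ≤ 1) :
    ∑ s ∈ S, w s * (f s (AffineMap.lineMap x y t) - f s x) < 0 := by
  refine Finset.sum_neg (fun s hs => mul_neg_of_pos_of_neg (hw s hs) ?_) hS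
  have hconv := (hf s hs).2 hx hy (sub_nonneg.2 ht₁) ht₀.le (sub_add_cancel 1 t)
  rw [← AffineMap.lineMap_apply_module, smul_eq_mul, smul_eq_mul, hfx s hs] at hconv
  rw [hfx s hs]
  nlinarith [mul_le_mul_of_nonneg_left (hfy s hs) ht₀.le]

theorem stmt14_general (k : ℕ) (C : Fin k → Matrix (Fin k) (Fin k) ℝ) (hC : inSk k C)
    (S0 : Finset (Finset (Fin k × Fin k))) (hS0 : S0.Nonempty)
    (hS0samp : ∀ s ∈ S0, IsSample s)
    (w : Finset (Fin k × Fin k) → ℝ) (hw : ∀ s ∈ S0, 0 < w s)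
    (hmax : ∀ s ∈ S0, gSample s C = gMax k C)
    (hbal : ∃ ε > 0, ∀ C' : Fin k → Matrix (Fin k) (Fin k) ℝ, inSk k C' →
      (∀ ℓ i j, |C' ℓ i j - C ℓ i j| < ε) →
      ∑ s ∈ S0, w s * (gSample s C' - gSample s C) = 0) :
    ∀ C' : Fin k → Matrix (Fin k) (Fin k) ℝ, inSk k C' → gMax k C ≤ gMax k C' := by
  intro C' hC'
  by_contra! hlt
  obtain ⟨ε, hε, hbal⟩ := hbal
  obtain ⟨t, ht₀, hclose, ht₁⟩ :=
    ((eventually_abs_lineMap_sub_lt C C' hε).and (eventually_lt_nhds one_pos)).exists_gt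
  have hsegment : AffineMap.lineMap C C' t ∈ {C | inSk k C} :=
    (convex_setOf_inSk k).lineMap_mem hC hC' ⟨ht₀.le, ht₁.le⟩
  exact (sum_mul_sub_neg_of_lineMap hS0 (fun s _ => convexOn_gSample s) hw (Set.mem_univ C)
    (Set.mem_univ C') hmax (fun s hs => gSample_le_gMax (hS0samp s hs) C') hlt ht₀ ht₁.le).ne
    (hbal _ hsegment hclose)

theorem stmt14 (k : ℕ) (hk : 0 < k) (C : Fin k → Matrix (Fin k) (Fin k) ℝ) (hC : inSk k C)
    (S0 : Finset (Finset (Fin k × Fin k))) (hS0 : S0.Nonempty)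
    (hS0samp : ∀ s ∈ S0, IsSample s)
    (w : Finset (Fin k × Fin k) → ℝ) (hw : ∀ s ∈ S0, 0 < w s)
    (hmax : ∀ s ∈ S0, gSample s C = gMax k C)
    (hbal : ∃ ε > 0, ∀ C' : Fin k → Matrix (Fin k) (Fin k) ℝ, inSk k C' →
      (∀ ℓ i j, |C' ℓ i j - C ℓ i j| < ε) →
      ∑ s ∈ S0, w s * (gSample s C' - gSample s C) = 0) :
    ∀ C' : Fin k → Matrix (Fin k) (Fin k) ℝ, inSk k C' → gMax k C ≤ gMax k C' :=
  stmt14_general k C hC S0 hS0 hS0samp w hw hmax hbal
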